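/- Let G be a simple directed graph on vertices {1, ..., N} with adjacency matrix A, ordered so that the non-sink vertices are 1, ..., n. Let Π0 = {T_1^(0), ..., T_n^(0)} be the initial covering by minimal star pseudotrees, and for i, j ∈ {1, ..., n} define a_ij = (column i of A + 𝔦I)ᵀ (column j of A + 𝔦I) over the complex numbers, where 𝔦 is the imaginary unit. Then the characteristic matrix ℳ^(0) of Π0 satisfies: ℳ^(0)_ii = 0 for all i; and for i ≠ j, ℳ^(0)_ij = ∅ if and only if a_ij = 0; ℳ^(0)_ij = 1 if and only if Re(a_ij) = 0, Im(a_ij) ≠ 0, and A_ij ≠ 0; and ℳ^(0)_ij = 0 in all remaining cases, i.e., if Re(a_ij) ≠ 0, or if Re(a_ij) = 0, Im(a_ij) ≠ 0 and A_ij = 0. -/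

import Mathlib

/-- A finite simple directed graph: a finite vertex set, a finite set of directed
edges (ordered pairs) between vertices, with no self-loops. Since `edges` is a
`Finset`, there are no repeated edges. -/
structure FinDigraph (V : Type*) [DecidableEq V] where
  verts : Finset V
  edges : Finset (V × V)
  mem_fst : ∀ e ∈ edges, e.1 ∈ verts
  mem_snd : ∀ e ∈ edges, e.2 ∈ verts
  no_loops : ∀ e ∈ edges, e.1 ≠ e.2

namespace FinDigraph

variable {V : Type*} [DecidableEq V]

/-- Adjacency in the underlying undirected graph. -/
def Adj (G : FinDigraph V) (a b : V) : Prop := (a, b) ∈ G.edges ∨ (b, a) ∈ G.edges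

/-- `G` is connected if its underlying undirected graph is connected. -/
def Connected (G : FinDigraph V) : Prop :=
  G.verts.Nonempty ∧ ∀ u ∈ G.verts, ∀ v ∈ G.verts, Relation.ReflTransGen G.Adj u v

/-- The set of in-neighbors of `j`. -/
def inNbrs (G : FinDigraph V) (j : V) : Finset V := G.verts.filter fun i => (i, j) ∈ G.edges

/-- The set of out-neighbors of `j`. -/
def outNbrs (G : FinDigraph V) (j : V) : Finset V := G.verts.filter fun i => (j, i) ∈ G.edges

/-- The sinks of `G`: vertices without out-neighbors. -/
def sinks (G : FinDigraph V) : Finset V := G.verts.filter fun j => G.outNbrs j = ∅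

/-- The sources of `G`: vertices without in-neighbors. -/
def sources (G : FinDigraph V) : Finset V := G.verts.filter fun j => G.inNbrs j = ∅

def IsSubgraph (H G : FinDigraph V) : Prop := H.verts ⊆ G.verts ∧ H.edges ⊆ G.edges

/-- A (directed) pseudotree: a connected simple directed graph with at least two
vertices in which every vertex has at most one in-neighbor. -/
def IsPseudotree (T : FinDigraph V) : Prop :=
  T.Connected ∧ 2 ≤ T.verts.card ∧ ∀ j ∈ T.verts, (T.inNbrs j).card ≤ 1

/-- An anti-pseudotree: a connected simple directed graph with at least two
vertices in which every vertex has at most one out-neighbor. -/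
def IsAntiPseudotree (T : FinDigraph V) : Prop :=
  T.Connected ∧ 2 ≤ T.verts.card ∧ ∀ j ∈ T.verts, (T.outNbrs j).card ≤ 1

/-- `l` is the list of vertices visited by a directed path from `u` to `v`:
consecutive vertices are joined by directed edges, and no vertex repeats. -/
def IsPath (G : FinDigraph V) (u v : V) (l : List V) : Prop :=
  l ≠ [] ∧ l.Chain' (fun a b => (a, b) ∈ G.edges) ∧ l.Nodup ∧
    l.head? = some u ∧ l.getLast? = some v

/-- `r` is a root of `T` if there is exactly one directed path from `r`
to every other vertex of `T`. -/
def IsRoot (T : FinDigraph V) (r : V) : Prop :=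
  r ∈ T.verts ∧ ∀ v ∈ T.verts, v ≠ r → ∃! l : List V, T.IsPath r v l

/-- `Υ(T)`: the set of roots of `T`. -/
def roots (T : FinDigraph V) : Set V := {r | T.IsRoot r}

/-- A leaf: a vertex of `T` without out-neighbors in `T`. -/
def IsLeaf (T : FinDigraph V) (v : V) : Prop := v ∈ T.verts ∧ T.outNbrs v = ∅

/-- The edges of `E` outgoing from `j`. -/
def outEdges (E : Finset (V × V)) (j : V) : Finset (V × V) := E.filter fun e => e.1 = j

/-- The edges of `E` incoming to (ending at) `j`. -/
def inEdges (E : Finset (V × V)) (j : V) : Finset (V × V) := E.filter fun e => e.2 = j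

/-- Two pseudotrees are disjoint if (1) they share no edges and (2) for every
vertex of their union, all outgoing edges (within the union of the edge sets)
belong to one and the same pseudotree. -/
def DisjointPTrees (T1 T2 : FinDigraph V) : Prop :=
  T1.edges ∩ T2.edges = ∅ ∧
  ∀ j ∈ T1.verts ∪ T2.verts,
    outEdges (T1.edges ∪ T2.edges) j ⊆ T1.edges ∨
    outEdges (T1.edges ∪ T2.edges) j ⊆ T2.edges

/-- Two anti-pseudotrees are disjoint if they share no edges and, for every
vertex of their union, all incoming edges of that vertex are in a single one
of the two anti-pseudotrees. -/
def DisjointAntiPTrees (T1 T2 : FinDigraph V) : Prop :=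
  T1.edges ∩ T2.edges = ∅ ∧
  ∀ j ∈ T1.verts ∪ T2.verts,
    inEdges (T1.edges ∪ T2.edges) j ⊆ T1.edges ∨
    inEdges (T1.edges ∪ T2.edges) j ⊆ T2.edges

/-- The union of two digraphs. -/
def union (T1 T2 : FinDigraph V) : FinDigraph V where
  verts := T1.verts ∪ T2.verts
  edges := T1.edges ∪ T2.edges
  mem_fst := fun e he => by
    rcases Finset.mem_union.mp he with h | h
    · exact Finset.mem_union_left _ (T1.mem_fst e h)
    · exact Finset.mem_union_right _ (T2.mem_fst e h)
  mem_snd := fun e he => by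
    rcases Finset.mem_union.mp he with h | h
    · exact Finset.mem_union_left _ (T1.mem_snd e h)
    · exact Finset.mem_union_right _ (T2.mem_snd e h)
  no_loops := fun e he => by
    rcases Finset.mem_union.mp he with h | h
    · exact T1.no_loops e h
    · exact T2.no_loops e h

/-- `T1` is mergeable to `T2`: they are disjoint pseudotrees sharing a vertex,
their union graph is a pseudotree, and there is a directed path (in the union)
from every root of `T2` to every vertex of `T1`. -/
def Mergeable (T1 T2 : FinDigraph V) : Prop :=
  DisjointPTrees T1 T2 ∧ (T1.verts ∩ T2.verts).Nonempty ∧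
  IsPseudotree (union T1 T2) ∧
  ∀ r ∈ roots T2, ∀ v ∈ T1.verts, ∃ l : List V, (union T1 T2).IsPath r v l

/-- The minimal star pseudotree rooted at `j`: vertex `j` together with all its
out-neighbors in `G`, and all the edges of `G` outgoing from `j`. -/
def star (G : FinDigraph V) (j : V) : FinDigraph V where
  verts := insert j (G.outNbrs j)
  edges := G.edges.filter fun e => e.1 = j
  mem_fst := fun e he => by
    have h := Finset.mem_filter.mp he
    simp [h.2]
  mem_snd := fun e he => by
    have h := Finset.mem_filter.mp he
    have h2 : e.2 ∈ G.outNbrs j := by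
      refine Finset.mem_filter.mpr ⟨G.mem_snd e h.1, ?_⟩
      have he' : e = (j, e.2) := by
        obtain ⟨a, b⟩ := e
        simp only at h ⊢
        rw [h.2]
      rw [← he']
      exact h.1
    exact Finset.mem_insert_of_mem h2
  no_loops := fun e he => G.no_loops e (Finset.mem_filter.mp he).1

/-- The minimal anti-star rooted at `j`: vertex `j` together with all its
in-neighbors in `G`, and all the edges of `G` incoming to `j`. -/
def antiStar (G : FinDigraph V) (j : V) : FinDigraph V where
  verts := insert j (G.inNbrs j)
  edges := G.edges.filter fun e => e.2 = j
  mem_fst := fun e he => by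
    have h := Finset.mem_filter.mp he
    have h2 : e.1 ∈ G.inNbrs j := by
      refine Finset.mem_filter.mpr ⟨G.mem_fst e h.1, ?_⟩
      have he' : e = (e.1, j) := by
        obtain ⟨a, b⟩ := e
        simp only at h ⊢
        rw [h.2]
      rw [← he']
      exact h.1
    exact Finset.mem_insert_of_mem h2
  mem_snd := fun e he => by
    have h := Finset.mem_filter.mp he
    simp [h.2]
  no_loops := fun e he => G.no_loops e (Finset.mem_filter.mp he).1

end FinDigraph

/-- The three-element set `𝕄 = {1, 0, ∅}`. -/
inductive MSym : Type
  | one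
  | zero
  | emp
deriving DecidableEq

/-- The commutative operator `⊙` on `𝕄`:
`1⊙1 = 1`, `1⊙0 = 0`, `1⊙∅ = 1`, `0⊙0 = 0`, `∅⊙0 = 0`, `∅⊙∅ = ∅`. -/
def modot : MSym → MSym → MSym
  | .zero, _ => .zero
  | _, .zero => .zero
  | .one, _ => .one
  | _, .one => .one
  | .emp, .emp => .emp

open Classical in
/-- The characteristic matrix of a (disjoint pseudotree) covering `T`:
entry `(i,j)` is `1` if `T i` is mergeable to `T j`, `∅` if they share no
vertices, and `0` otherwise. -/
noncomputable def charMat {V : Type*} [DecidableEq V] {ι : Type*} (T : ι → FinDigraph V) :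
    ι → ι → MSym := fun i j =>
  if FinDigraph.Mergeable (T i) (T j) then .one
  else if (T i).verts ∩ (T j).verts = ∅ then .emp
  else .zero

/-- The reduction `F(M, i, j)`: replace row `j` by (row `i`) ⊙ (row `j`),
replace column `j` by (column `i`) ⊙ (column `j`), then delete row and
column `i`. -/
def reduceF {n : ℕ} (M : Fin n → Fin n → MSym) (i j : Fin n) :
    {k : Fin n // k ≠ i} → {k : Fin n // k ≠ i} → MSym := fun a b =>
  let M1 : Fin n → Fin n → MSym := fun p q => if p = j then modot (M i q) (M j q) else M p q
  let M2 : Fin n → Fin n → MSym := fun p q => if q = j then modot (M1 p i) (M1 p j) else M1 p q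
  M2 a.val b.val


namespace FinDigraph

variable {V : Type*} [DecidableEq V]

lemma mem_outNbrs {G : FinDigraph V} {j v : V} : v ∈ G.outNbrs j ↔ (j, v) ∈ G.edges := by
  simp only [outNbrs, Finset.mem_filter]
  exact ⟨fun h => h.2, fun h => ⟨G.mem_snd _ h, h⟩⟩

lemma mem_star_edges {G : FinDigraph V} {j : V} {e : V × V} :
    e ∈ (G.star j).edges ↔ e ∈ G.edges ∧ e.1 = j := Finset.mem_filter

lemma mem_star_verts {G : FinDigraph V} {j v : V} :
    v ∈ (G.star j).verts ↔ v = j ∨ (j, v) ∈ G.edges := by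
  simp only [star, Finset.mem_insert, mem_outNbrs]

/-- Any path in a star is trivial or a single edge from the center. -/
lemma star_path_structure {G : FinDigraph V} {j u v : V} {l : List V}
    (h : (G.star j).IsPath u v l) :
    (l = [u] ∧ u = v) ∨ (u = j ∧ l = [j, v] ∧ (j, v) ∈ G.edges) := by
  obtain ⟨hne, hchain, hnd, hhead, hlast⟩ := h
  cases l with
  | nil => simp at hhead
  | cons a t =>
    simp only [List.head?_cons, Option.some.injEq] at hhead
    subst hhead
    cases t with
    | nil =>
      simp only [List.getLast?_singleton, Option.some.injEq] at hlast
      exact Or.inl ⟨rfl, hlast⟩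
    | cons b t' =>
      have hab : (a, b) ∈ (G.star j).edges := (List.isChain_cons_cons.mp hchain).1
      have haj : a = j := (mem_star_edges.mp hab).2
      cases t' with
      | nil =>
        have hbv : b = v := by simpa using hlast
        subst haj; subst hbv
        exact Or.inr ⟨rfl, rfl, (mem_star_edges.mp hab).1⟩
      | cons c t'' =>
        have hbc : (b, c) ∈ (G.star j).edges :=
          (List.isChain_cons_cons.mp (List.isChain_cons_cons.mp hchain).2).1
        have hbj : b = j := (mem_star_edges.mp hbc).2
        subst haj; subst hbj
        simp at hnd

lemma star_isRoot (G : FinDigraph V) (j : V) : (G.star j).IsRoot j := by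
  refine ⟨mem_star_verts.mpr (Or.inl rfl), fun v hv hvj => ?_⟩
  have hjv : (j, v) ∈ G.edges := (mem_star_verts.mp hv).resolve_left hvj
  have hjvne : j ≠ v := G.no_loops _ hjv
  refine ⟨[j, v], ⟨by simp, ?_, by simp [hjvne], by simp, by simp⟩, ?_⟩
  · simp [List.Chain', List.isChain_cons_cons, mem_star_edges.mpr ⟨hjv, rfl⟩]
  · intro l hl
    rcases star_path_structure hl with ⟨hl1, huv⟩ | ⟨_, hl2, _⟩
    · exact absurd huv.symm hvj
    · exact hl2

lemma star_roots_eq {G : FinDigraph V} {j r : V} (hr : r ∈ (G.star j).roots) : r = j := by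
  by_contra hrj
  have hjv : j ∈ (G.star j).verts := mem_star_verts.mpr (Or.inl rfl)
  obtain ⟨l, hl, -⟩ := hr.2 j hjv (Ne.symm hrj)
  rcases star_path_structure hl with ⟨_, huv⟩ | ⟨hrj', _, _⟩
  · exact hrj huv
  · exact hrj hrj'

lemma exists_edge_into_of_path {G : FinDigraph V} {u v : V} {l : List V}
    (h : G.IsPath u v l) (hne : u ≠ v) : ∃ w, (w, v) ∈ G.edges := by
  obtain ⟨hl, hchain, hnd, hhead, hlast⟩ := h
  have hg : l.getLast hl = v := by
    have h1 := List.getLast?_eq_getLast hl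
    rw [hlast] at h1
    exact (Option.some.injEq _ _ ▸ h1.symm :)
  have h1 : l.dropLast ++ [v] = l := by
    rw [← hg]; exact List.dropLast_append_getLast hl
  have hdne : l.dropLast ≠ [] := by
    intro h2
    rw [h2, List.nil_append] at h1
    rw [← h1] at hhead
    simp at hhead
    exact hne hhead.symm
  rw [← h1] at hchain
  obtain ⟨-, -, hR⟩ := List.isChain_append.mp hchain
  refine ⟨l.dropLast.getLast hdne, hR _ (List.getLast?_eq_getLast hdne) v rfl⟩

end FinDigraph

namespace FinDigraph

variable {V : Type*} [DecidableEq V]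

lemma star_mergeable_iff {G : FinDigraph V} {i j : V} (hij : i ≠ j) :
    Mergeable (G.star i) (G.star j) ↔
      ((∀ k, ¬((i, k) ∈ G.edges ∧ (j, k) ∈ G.edges)) ∧ (j, i) ∈ G.edges) := by
  constructor
  · rintro ⟨hdisj, hne, hpt, hpath⟩
    constructor
    · rintro k ⟨hik, hjk⟩
      have hkv : k ∈ (union (G.star i) (G.star j)).verts :=
        Finset.mem_union_left _ (mem_star_verts.mpr (Or.inr hik))
      have hdeg := hpt.2.2 k hkv
      have hsub : ({i, j} : Finset V) ⊆ (union (G.star i) (G.star j)).inNbrs k := by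
        intro x hx
        simp only [Finset.mem_insert, Finset.mem_singleton] at hx
        rcases hx with rfl | rfl
        · exact Finset.mem_filter.mpr ⟨Finset.mem_union_left _ (mem_star_verts.mpr (Or.inl rfl)),
            Finset.mem_union_left _ (mem_star_edges.mpr ⟨hik, rfl⟩)⟩
        · exact Finset.mem_filter.mpr ⟨Finset.mem_union_right _ (mem_star_verts.mpr (Or.inl rfl)),
            Finset.mem_union_right _ (mem_star_edges.mpr ⟨hjk, rfl⟩)⟩
      have h2 : 2 ≤ ((union (G.star i) (G.star j)).inNbrs k).card := by
        calc 2 = ({i, j} : Finset V).card := by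
                rw [Finset.card_insert_of_notMem (by simpa using hij), Finset.card_singleton]
          _ ≤ _ := Finset.card_le_card hsub
      omega
    · have hjr : j ∈ roots (G.star j) := star_isRoot G j
      obtain ⟨l, hl⟩ := hpath j hjr i (mem_star_verts.mpr (Or.inl rfl))
      obtain ⟨w, hw⟩ := exists_edge_into_of_path hl (Ne.symm hij)
      rcases Finset.mem_union.mp hw with h | h
      · have := mem_star_edges.mp h
        exact absurd this.2 (G.no_loops _ this.1)
      · have := mem_star_edges.mp h
        rw [← this.2]
        exact this.1
  · rintro ⟨hP, hji⟩
    have hji' : i ∈ (G.star j).verts := mem_star_verts.mpr (Or.inr hji)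
    have hii : i ∈ (G.star i).verts := mem_star_verts.mpr (Or.inl rfl)
    have hjj : j ∈ (G.star j).verts := mem_star_verts.mpr (Or.inl rfl)
    have hjinU : (j, i) ∈ (union (G.star i) (G.star j)).edges :=
      Finset.mem_union_right _ (mem_star_edges.mpr ⟨hji, rfl⟩)
    have hAdjsymm : Symmetric (union (G.star i) (G.star j)).Adj := fun a b h => h.symm
    -- every vertex of the union is connected to i
    have hconn : ∀ w ∈ (union (G.star i) (G.star j)).verts,
        Relation.ReflTransGen (union (G.star i) (G.star j)).Adj w i := by
      intro w hw
      have hji_adj : (union (G.star i) (G.star j)).Adj j i := Or.inl hjinU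
      rcases Finset.mem_union.mp hw with h | h
      · rcases mem_star_verts.mp h with rfl | hiw
        · exact Relation.ReflTransGen.refl
        · exact Relation.ReflTransGen.single
            (Or.inr (Finset.mem_union_left _ (mem_star_edges.mpr ⟨hiw, rfl⟩)))
      · rcases mem_star_verts.mp h with rfl | hjw
        · exact Relation.ReflTransGen.single hji_adj
        · exact Relation.ReflTransGen.head
            (Or.inr (Finset.mem_union_right _ (mem_star_edges.mpr ⟨hjw, rfl⟩)))
            (Relation.ReflTransGen.single hji_adj)
    refine ⟨⟨?_, ?_⟩, ⟨i, Finset.mem_inter.mpr ⟨hii, hji'⟩⟩, ⟨⟨?_, ?_⟩, ?_, ?_⟩, ?_⟩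
    · -- edge sets disjoint
      rw [Finset.eq_empty_iff_forall_notMem]
      intro e he
      have h1 := mem_star_edges.mp (Finset.mem_inter.mp he).1
      have h2 := mem_star_edges.mp (Finset.mem_inter.mp he).2
      exact hij (h1.2 ▸ h2.2 ▸ rfl)
    · -- outgoing edges in one side
      intro k _
      by_cases hk : k = i
      · left
        intro e he
        have h1 := Finset.mem_filter.mp he
        rcases Finset.mem_union.mp h1.1 with h | h
        · exact h
        · exact absurd ((h1.2.trans hk).symm.trans (mem_star_edges.mp h).2) hij
      · right
        intro e he
        have h1 := Finset.mem_filter.mp he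
        rcases Finset.mem_union.mp h1.1 with h | h
        · exact absurd (h1.2.symm.trans (mem_star_edges.mp h).2) hk
        · exact h
    · exact ⟨i, Finset.mem_union_left _ hii⟩
    · -- connectedness
      intro u hu v hv
      exact (hconn u hu).trans ((@Std.Symm.symm _ _ (@Relation.ReflTransGen.stdSymm _ _ ⟨fun a b h => hAdjsymm h⟩) _ _) (hconn v hv))
    · -- at least two vertices
      exact Finset.one_lt_card.mpr
        ⟨i, Finset.mem_union_left _ hii, j, Finset.mem_union_right _ hjj, hij⟩
    · -- in-degree at most one
      intro k hk
      by_cases hik : (i, k) ∈ G.edges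
      · refine le_trans (Finset.card_le_card (fun x hx => ?_)) (Finset.card_singleton i).le
        have h1 := Finset.mem_filter.mp hx
        rcases Finset.mem_union.mp h1.2 with h | h
        · simpa using (mem_star_edges.mp h).2
        · exact absurd ⟨hik, (mem_star_edges.mp h).2 ▸ (mem_star_edges.mp h).1⟩ (hP k)
      · refine le_trans (Finset.card_le_card (fun x hx => ?_)) (Finset.card_singleton j).le
        have h1 := Finset.mem_filter.mp hx
        rcases Finset.mem_union.mp h1.2 with h | h
        · exact absurd ((mem_star_edges.mp h).2 ▸ (mem_star_edges.mp h).1) hik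
        · simpa using (mem_star_edges.mp h).2
    · -- paths from roots of star j to vertices of star i
      intro r hr v hv
      have hrj : r = j := star_roots_eq hr
      subst hrj
      rcases mem_star_verts.mp hv with rfl | hiv
      · exact ⟨[r, v], by simp, by simp [List.Chain', List.isChain_cons_cons, hjinU], by simp [Ne.symm hij],
          by simp, by simp⟩
      · by_cases hvr : v = r
        · exact ⟨[r], by simp, List.isChain_singleton _, by simp, by simp, by simp [hvr]⟩
        · have hivU : (i, v) ∈ (union (G.star i) (G.star r)).edges :=
            Finset.mem_union_left _ (mem_star_edges.mpr ⟨hiv, rfl⟩)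
          have hivne : i ≠ v := G.no_loops _ hiv
          refine ⟨[r, i, v], by simp, ?_, ?_, by simp, by simp⟩
          · simp [List.Chain', List.isChain_cons_cons, hjinU, hivU]
          · simp [Ne.symm hij, Ne.symm hvr, hivne]

end FinDigraph

open FinDigraph in
/-- for a simple directed graph on `{1, ..., N}` whose non-sink
vertices come first, the characteristic matrix `ℳ⁽⁰⁾` of the initial covering by
minimal star pseudotrees is computed from the adjacency matrix `A` via the
bilinear products `a_ij = (col_i(A + 𝔦I))ᵀ (col_j(A + 𝔦I))`:
`ℳ⁽⁰⁾_ii = 0`; for `i ≠ j`, `ℳ⁽⁰⁾_ij = ∅` iff `a_ij = 0`; `ℳ⁽⁰⁾_ij = 1` iff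
`Re(a_ij) = 0`, `Im(a_ij) ≠ 0` and `A_ij ≠ 0`; and `ℳ⁽⁰⁾_ij = 0` in the
remaining cases. -/
theorem statement_17 (N n : ℕ) (hn : n ≤ N) (G : FinDigraph (Fin N))
    (hverts : G.verts = Finset.univ)
    (hsink : ∀ k : Fin N, k.val < n ↔ G.outNbrs k ≠ ∅)
    (A : Matrix (Fin N) (Fin N) ℂ)
    (hA : ∀ p q, A p q = if (q, p) ∈ G.edges then 1 else 0)
    (T0 : Fin n → FinDigraph (Fin N))
    (hT0 : T0 = fun i => G.star (Fin.castLE hn i))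
    (a : Fin n → Fin n → ℂ)
    (ha : ∀ i j : Fin n, a i j =
      ∑ k : Fin N,
        (A + Complex.I • (1 : Matrix (Fin N) (Fin N) ℂ)) k (Fin.castLE hn i) *
        (A + Complex.I • (1 : Matrix (Fin N) (Fin N) ℂ)) k (Fin.castLE hn j)) :
    (∀ i : Fin n, charMat T0 i i = MSym.zero) ∧
    ∀ i j : Fin n, i ≠ j →
      (charMat T0 i j = MSym.emp ↔ a i j = 0) ∧
      (charMat T0 i j = MSym.one ↔
        ((a i j).re = 0 ∧ (a i j).im ≠ 0 ∧ A (Fin.castLE hn i) (Fin.castLE hn j) ≠ 0)) ∧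
      (charMat T0 i j = MSym.zero ↔
        ((a i j).re ≠ 0 ∨
          ((a i j).re = 0 ∧ (a i j).im ≠ 0 ∧ A (Fin.castLE hn i) (Fin.castLE hn j) = 0))) := by
  subst hT0
  constructor
  · -- diagonal
    intro i
    set ci := Fin.castLE hn i with hci
    have hns : G.outNbrs ci ≠ ∅ := (hsink ci).mp i.isLt
    obtain ⟨v, hv⟩ := Finset.nonempty_iff_ne_empty.mpr hns
    have hedge : (ci, v) ∈ (G.star ci).edges := mem_star_edges.mpr ⟨mem_outNbrs.mp hv, rfl⟩
    unfold charMat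
    rw [if_neg, if_neg]
    · rw [Finset.inter_self]
      intro h
      exact absurd (h ▸ mem_star_verts.mpr (Or.inl rfl)) (Finset.notMem_empty ci)
    · rintro ⟨⟨hd, -⟩, -⟩
      rw [Finset.inter_self] at hd
      exact absurd (hd ▸ hedge) (Finset.notMem_empty _)
  · intro i j hij
    set ci := Fin.castLE hn i with hci
    set cj := Fin.castLE hn j with hcj
    have hcc : ci ≠ cj := fun h => hij (Fin.castLE_injective hn h)
    -- arithmetic
    have hkey : a i j =
        ((Finset.univ.filter fun k : Fin N =>
            (ci, k) ∈ G.edges ∧ (cj, k) ∈ G.edges).card : ℂ)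
        + (((if (cj, ci) ∈ G.edges then (1:ℝ) else 0)
            + (if (ci, cj) ∈ G.edges then (1:ℝ) else 0) : ℝ) : ℂ) * Complex.I := by
      rw [ha]
      have expand : ∀ k : Fin N,
          (A + Complex.I • (1 : Matrix (Fin N) (Fin N) ℂ)) k ci *
            (A + Complex.I • (1 : Matrix (Fin N) (Fin N) ℂ)) k cj
          = (if (ci, k) ∈ G.edges ∧ (cj, k) ∈ G.edges then 1 else 0)
            + ((if k = cj then (if (ci, k) ∈ G.edges then (1:ℂ) else 0) else 0)
              + (if k = ci then (if (cj, k) ∈ G.edges then (1:ℂ) else 0) else 0)) * Complex.I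
            - (if k = ci then (1:ℂ) else 0) * (if k = cj then 1 else 0) := by
        intro k
        have hx : ∀ (P Q : Prop) (_ : Decidable P) (_ : Decidable Q),
            (if P ∧ Q then (1:ℂ) else 0) = (if P then 1 else 0) * (if Q then 1 else 0) := by
          intro P Q _ _
          by_cases hP : P <;> by_cases hQ : Q <;> simp [hP, hQ]
        have hy : ∀ (P Q : Prop) (_ : Decidable P) (_ : Decidable Q),
            (if P then (if Q then (1:ℂ) else 0) else 0)
              = (if Q then 1 else 0) * (if P then 1 else 0) := by
          intro P Q _ _
          by_cases hP : P <;> by_cases hQ : Q <;> simp [hP, hQ]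
        simp only [Matrix.add_apply, Matrix.smul_apply, Matrix.one_apply, smul_eq_mul, hA]
        rw [hx, hy, hy]
        linear_combination ((if k = ci then (1:ℂ) else 0) * (if k = cj then 1 else 0)) *
          Complex.I_sq
      rw [Finset.sum_congr rfl fun k _ => expand k]
      rw [Finset.sum_sub_distrib, Finset.sum_add_distrib]
      have e1 : ∑ k : Fin N, (if (ci, k) ∈ G.edges ∧ (cj, k) ∈ G.edges then (1:ℂ) else 0)
          = ((Finset.univ.filter fun k : Fin N =>
              (ci, k) ∈ G.edges ∧ (cj, k) ∈ G.edges).card : ℂ) := by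
        rw [Finset.sum_boole]
      have e2 : ∑ k : Fin N,
          ((if k = cj then (if (ci, k) ∈ G.edges then (1:ℂ) else 0) else 0)
            + (if k = ci then (if (cj, k) ∈ G.edges then (1:ℂ) else 0) else 0)) * Complex.I
          = (((if (cj, ci) ∈ G.edges then (1:ℝ) else 0)
              + (if (ci, cj) ∈ G.edges then (1:ℝ) else 0) : ℝ) : ℂ) * Complex.I := by
        rw [← Finset.sum_mul]
        congr 1
        rw [Finset.sum_add_distrib, Finset.sum_ite_eq' Finset.univ cj
            (fun k => if (ci, k) ∈ G.edges then (1:ℂ) else 0),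
          Finset.sum_ite_eq' Finset.univ ci
            (fun k => if (cj, k) ∈ G.edges then (1:ℂ) else 0)]
        simp only [Finset.mem_univ, if_true]
        push_cast [apply_ite Complex.ofReal]
        ring
      have e3 : ∑ k : Fin N, (if k = ci then (1:ℂ) else 0) * (if k = cj then 1 else 0)
          = 0 := by
        apply Finset.sum_eq_zero
        intro k _
        by_cases h3 : k = ci
        · subst h3
          simp [hcc]
        · simp [h3]
      rw [e1, e2, e3, sub_zero]
    have hre : (a i j).re = ((Finset.univ.filter fun k : Fin N =>
        (ci, k) ∈ G.edges ∧ (cj, k) ∈ G.edges).card : ℝ) := by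
      rw [hkey]; simp
    have him : (a i j).im = (if (cj, ci) ∈ G.edges then (1:ℝ) else 0)
        + (if (ci, cj) ∈ G.edges then (1:ℝ) else 0) := by
      rw [hkey]; simp
    have hre0 : (a i j).re = 0 ↔ ∀ k, ¬((ci, k) ∈ G.edges ∧ (cj, k) ∈ G.edges) := by
      rw [hre, Nat.cast_eq_zero, Finset.card_eq_zero, Finset.filter_eq_empty_iff]
      simp
    have him0 : (a i j).im ≠ 0 ↔ ((cj, ci) ∈ G.edges ∨ (ci, cj) ∈ G.edges) := by
      rw [him]
      by_cases h1 : (cj, ci) ∈ G.edges <;> by_cases h2 : (ci, cj) ∈ G.edges <;>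
        simp [h1, h2]
    have ha0 : a i j = 0 ↔ ((a i j).re = 0 ∧ (a i j).im = 0) := by
      rw [Complex.ext_iff]; simp
    have hAij : A ci cj ≠ 0 ↔ (cj, ci) ∈ G.edges := by
      rw [hA]
      by_cases h : (cj, ci) ∈ G.edges <;> simp [h]
    have hinter : ((G.star ci).verts ∩ (G.star cj).verts = ∅) ↔
        (¬(ci, cj) ∈ G.edges ∧ ¬(cj, ci) ∈ G.edges ∧
          ∀ k, ¬((ci, k) ∈ G.edges ∧ (cj, k) ∈ G.edges)) := by
      rw [Finset.eq_empty_iff_forall_notMem]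
      constructor
      · intro h
        refine ⟨fun hx => h cj (Finset.mem_inter.mpr
            ⟨mem_star_verts.mpr (Or.inr hx), mem_star_verts.mpr (Or.inl rfl)⟩),
          fun hx => h ci (Finset.mem_inter.mpr
            ⟨mem_star_verts.mpr (Or.inl rfl), mem_star_verts.mpr (Or.inr hx)⟩),
          fun k hk => h k (Finset.mem_inter.mpr
            ⟨mem_star_verts.mpr (Or.inr hk.1), mem_star_verts.mpr (Or.inr hk.2)⟩)⟩
      · rintro ⟨h1, h2, h3⟩ v hv
        obtain ⟨hv1, hv2⟩ := Finset.mem_inter.mp hv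
        rcases mem_star_verts.mp hv1 with rfl | hva
        · rcases mem_star_verts.mp hv2 with h | h
          · exact hcc h
          · exact h2 h
        · rcases mem_star_verts.mp hv2 with rfl | hvb
          · exact h1 hva
          · exact h3 v ⟨hva, hvb⟩
    have hmerg : Mergeable (G.star ci) (G.star cj) ↔
        ((∀ k, ¬((ci, k) ∈ G.edges ∧ (cj, k) ∈ G.edges)) ∧ (cj, ci) ∈ G.edges) :=
      star_mergeable_iff hcc
    unfold charMat
    by_cases hM : Mergeable (G.star ci) (G.star cj)
    · obtain ⟨hP, hji⟩ := hmerg.mp hM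
      rw [if_pos hM]
      have hre' : (a i j).re = 0 := hre0.mpr hP
      have him' : (a i j).im ≠ 0 := him0.mpr (Or.inl hji)
      refine ⟨iff_of_false (by decide) (fun h0 => him' (ha0.mp h0).2),
        iff_of_true rfl ⟨hre', him', hAij.mpr hji⟩,
        iff_of_false (by decide) ?_⟩
      rintro (h | ⟨-, -, h⟩)
      · exact h hre'
      · exact hAij.mpr hji h
    · rw [if_neg hM]
      by_cases hE : (G.star ci).verts ∩ (G.star cj).verts = ∅
      · obtain ⟨h1, h2, h3⟩ := hinter.mp hE
        rw [if_pos hE]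
        have hre' : (a i j).re = 0 := hre0.mpr h3
        have him' : (a i j).im = 0 := by
          by_contra h
          rcases him0.mp h with h | h
          · exact h2 h
          · exact h1 h
        refine ⟨iff_of_true rfl (ha0.mpr ⟨hre', him'⟩),
          iff_of_false (by decide) (fun h => h.2.1 him'),
          iff_of_false (by decide) ?_⟩
        rintro (h | ⟨-, h, -⟩)
        · exact h hre'
        · exact h him'
      · rw [if_neg hE]
        refine ⟨iff_of_false (by decide) ?_, iff_of_false (by decide) ?_,
          iff_of_true rfl ?_⟩
        · intro h
          obtain ⟨hre', him'⟩ := ha0.mp h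
          have h3 := hre0.mp hre'
          have h12 : ¬(ci, cj) ∈ G.edges ∧ ¬(cj, ci) ∈ G.edges := by
            constructor <;> intro hx
            · exact (him0.mpr (Or.inr hx)) him'
            · exact (him0.mpr (Or.inl hx)) him'
          exact absurd (hinter.mpr ⟨h12.1, h12.2, h3⟩) hE
        · rintro ⟨hre', -, hA'⟩
          exact absurd (hmerg.mpr ⟨hre0.mp hre', hAij.mp hA'⟩) hM
        · by_cases hre' : (a i j).re = 0
          · right
            refine ⟨hre', ?_, ?_⟩
            · intro him'
              have h12 : ¬(ci, cj) ∈ G.edges ∧ ¬(cj, ci) ∈ G.edges := by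
                constructor <;> intro hx
                · exact (him0.mpr (Or.inr hx)) him'
                · exact (him0.mpr (Or.inl hx)) him'
              exact absurd (hinter.mpr ⟨h12.1, h12.2, hre0.mp hre'⟩) hE
            · by_contra hA'
              exact hM (hmerg.mpr ⟨hre0.mp hre', hAij.mp hA'⟩)
          · exact Or.inl hre'
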